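/- arXiv:2207.11220 — 5 statements merged into one kernel-verified Lean document; each statement's English description precedes it below -/
import Mathlib

section
/- Define recursively V₁ = C ∈ ℝ^{l×n}, T₁ = 0 ∈ ℝ^{l×m}, and for t ≥ 1, letting d_t and e_t be the numbers of rows and columns of V_t and T_t respectively (so d_1 = l, e_1 = m, d_{t+1} = l + r·d_t, e_{t+1} = m + r·e_t), set V_{t+1} = [C ; (V_t ⊗ I_r)A] ∈ ℝ^{d_{t+1}×n} and T_{t+1} = [[0_{l×m}, 0_{l×r e_t}],[(V_t ⊗ I_r)B, T_t ⊗ I_r]] ∈ ℝ^{d_{t+1}×e_{t+1}}. Then for every t ≥ 1 the fixed point iterate satisfies X_t = V_tᵀ(I_{d_t} + T_t T_tᵀ)⁻¹V_t (Toeplitz-structure closed form of the fixed point iterates for SDAREs). -/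
open Matrix
open scoped Kronecker

/-- The SDARE Riccati operator `D(X) = Aᵀ (X ⊗ I_r) (I + B Bᵀ (X ⊗ I_r))⁻¹ A + Cᵀ C`,
with `rn` realized as the index type `Fin n × Fin r`. -/
noncomputable def Dop {n m l r : ℕ}
    (A : Matrix (Fin n × Fin r) (Fin n) ℝ)
    (B : Matrix (Fin n × Fin r) (Fin m) ℝ)
    (C : Matrix (Fin l) (Fin n) ℝ)
    (X : Matrix (Fin n) (Fin n) ℝ) : Matrix (Fin n) (Fin n) ℝ :=
  Aᵀ * (X ⊗ₖ (1 : Matrix (Fin r) (Fin r) ℝ)) *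
      (1 + B * Bᵀ * (X ⊗ₖ (1 : Matrix (Fin r) (Fin r) ℝ)))⁻¹ * A + Cᵀ * C

/-- Row index type of `V_t` (size `d_t = l (r^t - 1)/(r - 1)`); `RIdx l r t` indexes `V_{t+1}`. -/
@[reducible] def RIdx (l r : ℕ) : ℕ → Type
  | 0 => Fin l
  | t + 1 => Fin l ⊕ (RIdx l r t × Fin r)

/-- Column index type of `T_t` (size `e_t`); `CIdx m r t` indexes the columns of `T_{t+1}`. -/
@[reducible] def CIdx (m r : ℕ) : ℕ → Type
  | 0 => Fin m
  | t + 1 => Fin m ⊕ (CIdx m r t × Fin r)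

instance RIdx.fintype (l r : ℕ) : ∀ t, Fintype (RIdx l r t)
  | 0 => inferInstanceAs (Fintype (Fin l))
  | t + 1 => letI := RIdx.fintype l r t
      inferInstanceAs (Fintype (Fin l ⊕ (RIdx l r t × Fin r)))

instance RIdx.decEq (l r : ℕ) : ∀ t, DecidableEq (RIdx l r t)
  | 0 => inferInstanceAs (DecidableEq (Fin l))
  | t + 1 => letI := RIdx.decEq l r t
      inferInstanceAs (DecidableEq (Fin l ⊕ (RIdx l r t × Fin r)))

instance CIdx.fintype (m r : ℕ) : ∀ t, Fintype (CIdx m r t)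
  | 0 => inferInstanceAs (Fintype (Fin m))
  | t + 1 => letI := CIdx.fintype m r t
      inferInstanceAs (Fintype (Fin m ⊕ (CIdx m r t × Fin r)))

instance CIdx.decEq (m r : ℕ) : ∀ t, DecidableEq (CIdx m r t)
  | 0 => inferInstanceAs (DecidableEq (Fin m))
  | t + 1 => letI := CIdx.decEq m r t
      inferInstanceAs (DecidableEq (Fin m ⊕ (CIdx m r t × Fin r)))

/-- `Vseq A C t` is the matrix `V_{t+1}` of the paper: `V₁ = C`,
`V_{t+1} = [C ; (V_t ⊗ I_r) A]`. -/
noncomputable def Vseq {n l r : ℕ}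
    (A : Matrix (Fin n × Fin r) (Fin n) ℝ)
    (C : Matrix (Fin l) (Fin n) ℝ) : (t : ℕ) → Matrix (RIdx l r t) (Fin n) ℝ
  | 0 => C
  | t + 1 => Matrix.fromRows C ((Vseq A C t ⊗ₖ (1 : Matrix (Fin r) (Fin r) ℝ)) * A)

/-- `Tseq A B C t` is the matrix `T_{t+1}` of the paper: `T₁ = 0`,
`T_{t+1} = [[0, 0], [(V_t ⊗ I_r) B, T_t ⊗ I_r]]`. -/
noncomputable def Tseq {n m l r : ℕ}
    (A : Matrix (Fin n × Fin r) (Fin n) ℝ)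
    (B : Matrix (Fin n × Fin r) (Fin m) ℝ)
    (C : Matrix (Fin l) (Fin n) ℝ) : (t : ℕ) → Matrix (RIdx l r t) (CIdx m r t) ℝ
  | 0 => 0
  | t + 1 => Matrix.fromBlocks (0 : Matrix (Fin l) (Fin m) ℝ)
      (0 : Matrix (Fin l) (CIdx m r t × Fin r) ℝ)
      ((Vseq A C t ⊗ₖ (1 : Matrix (Fin r) (Fin r) ℝ)) * B)
      (Tseq A B C t ⊗ₖ (1 : Matrix (Fin r) (Fin r) ℝ))

/-!
By induction on `t`. If `X = Vᵀ G⁻¹ V` with `G = 1 + T Tᵀ`, then `X ⊗ I_r = Wᵀ K⁻¹ W` with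
`W = V ⊗ I_r` and `K = G ⊗ I_r = 1 + (T ⊗ I_r)(T ⊗ I_r)ᵀ`. The push-through identity
`Wᵀ K⁻¹ W (1 + P Wᵀ K⁻¹ W)⁻¹ = Wᵀ (K + W P Wᵀ)⁻¹ W` with `P = B Bᵀ` turns the Riccati step
into `Cᵀ C + (W A)ᵀ M⁻¹ (W A)`, where `M = 1 + R Rᵀ` for `R = [W B, T ⊗ I_r]`. Since
`1 + T_{t+1} T_{t+1}ᵀ = diag(1, M)`, this is `V_{t+1}ᵀ (1 + T_{t+1} T_{t+1}ᵀ)⁻¹ V_{t+1}`.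
Every matrix inverted along the way has the form `1 + R Rᵀ`, hence is positive definite.
-/

namespace Matrix

variable {ι κ μ ν ρ α : Type*} [CommRing α]

theorem mul_inv_mul_mul_inv_one_add_mul [Fintype ι] [Fintype κ] [DecidableEq ι]
    [DecidableEq κ] (U : Matrix κ ι α) (K : Matrix ι ι α) (W : Matrix ι κ α)
    (P : Matrix κ κ α) (hK : IsUnit K) (hM : IsUnit (K + W * P * U)) :
    U * K⁻¹ * W * (1 + P * (U * K⁻¹ * W))⁻¹ = U * (K + W * P * U)⁻¹ * W := by
  rw [isUnit_iff_isUnit_det] at hK hM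
  set M := K + W * P * U
  set N := 1 + P * (U * K⁻¹ * W)
  have hMK : 1 + W * (P * U * K⁻¹) = M * K⁻¹ := by
    rw [add_mul, mul_nonsing_inv K hK]; simp only [Matrix.mul_assoc]
  -- Sylvester's determinant identity gives `det N = det M * det K⁻¹`.
  have hN : IsUnit N.det := by
    rw [show N = 1 + P * U * K⁻¹ * W by simp only [N, Matrix.mul_assoc], det_one_add_mul_comm,
      hMK, det_mul]
    exact hM.mul (isUnit_nonsing_inv_det_iff.mpr hK)
  have hKW : K⁻¹ * W = M⁻¹ * (W * N) := by
    have : M * (K⁻¹ * W) = W * N := by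
      rw [← Matrix.mul_assoc, ← hMK, Matrix.add_mul, Matrix.one_mul, Matrix.mul_add,
        Matrix.mul_one]
      simp only [Matrix.mul_assoc]
    rw [← this, nonsing_inv_mul_cancel_left _ _ hM]
  calc U * K⁻¹ * W * N⁻¹ = U * M⁻¹ * (W * (N * N⁻¹)) := by
        rw [Matrix.mul_assoc U, hKW]; simp only [Matrix.mul_assoc]
    _ = U * M⁻¹ * W := by rw [mul_nonsing_inv N hN, Matrix.mul_one]

theorem transpose_mul_inv_mul_kronecker_one [Fintype ι] [DecidableEq ι] [Fintype ρ]
    [DecidableEq ρ] (V : Matrix ι ν α) (G : Matrix ι ι α) :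
    (Vᵀ * G⁻¹ * V) ⊗ₖ (1 : Matrix ρ ρ α)
      = (V ⊗ₖ (1 : Matrix ρ ρ α))ᵀ * (G ⊗ₖ (1 : Matrix ρ ρ α))⁻¹
        * (V ⊗ₖ (1 : Matrix ρ ρ α)) := by
  rw [inv_kronecker, inv_one, ← kroneckerMap_transpose, transpose_one, ← mul_kronecker_mul,
    ← mul_kronecker_mul, Matrix.one_mul, Matrix.one_mul]

theorem one_add_mul_transpose_kronecker_one [Fintype κ] [DecidableEq ι] [Fintype ρ]
    [DecidableEq ρ] (T : Matrix ι κ α) :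
    (1 + T * Tᵀ) ⊗ₖ (1 : Matrix ρ ρ α)
      = 1 + (T ⊗ₖ (1 : Matrix ρ ρ α)) * (T ⊗ₖ (1 : Matrix ρ ρ α))ᵀ := by
  rw [add_kronecker, one_kronecker_one, ← kroneckerMap_transpose, transpose_one,
    ← mul_kronecker_mul, Matrix.one_mul]

theorem one_add_fromBlocks_zero_mul_transpose [DecidableEq ι] [DecidableEq ν] [Fintype μ]
    [Fintype ρ] (Q : Matrix ι ρ α) (S : Matrix ι μ α) :
    1 + fromBlocks (0 : Matrix ν ρ α) (0 : Matrix ν μ α) Q S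
        * (fromBlocks (0 : Matrix ν ρ α) (0 : Matrix ν μ α) Q S)ᵀ
      = fromBlocks 1 0 0 (1 + fromCols Q S * (fromCols Q S)ᵀ) := by
  rw [fromBlocks_transpose, fromBlocks_multiply, transpose_fromCols, fromCols_mul_fromRows,
    ← fromBlocks_one, fromBlocks_add]
  simp

theorem fromRows_transpose_mul_inv_mul [Fintype ι] [DecidableEq ι] [Fintype ν] [DecidableEq ν]
    (C : Matrix ν μ α) (Y : Matrix ι μ α) (M : Matrix ι ι α) (hM : IsUnit M) :
    (fromRows C Y)ᵀ * (fromBlocks (1 : Matrix ν ν α) 0 0 M)⁻¹ * fromRows C Y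
      = Cᵀ * C + Yᵀ * M⁻¹ * Y := by
  rw [inv_fromBlocks_zero₁₂_of_isUnit_iff _ _ _ (iff_of_true isUnit_one hM)]
  simp [transpose_fromRows, fromCols_mul_fromBlocks, fromCols_mul_fromRows]

theorem posDef_one_add_mul_transpose [Fintype ι] [Fintype κ] [DecidableEq ι]
    (T : Matrix ι κ ℝ) : (1 + T * Tᵀ).PosDef := by
  simpa [conjTranspose_eq_transpose_of_trivial] using
    PosDef.one.add_posSemidef (posSemidef_self_mul_conjTranspose T)

end Matrix

theorem Dop_transpose_mul_inv_mul {n m l r : ℕ} {ι κ : Type*} [Fintype ι] [Fintype κ]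
    [DecidableEq ι] [DecidableEq κ]
    (A : Matrix (Fin n × Fin r) (Fin n) ℝ) (B : Matrix (Fin n × Fin r) (Fin m) ℝ)
    (C : Matrix (Fin l) (Fin n) ℝ) (V : Matrix ι (Fin n) ℝ) (T : Matrix ι κ ℝ) :
    let I : Matrix (Fin r) (Fin r) ℝ := 1
    let T' := fromBlocks (0 : Matrix (Fin l) (Fin m) ℝ) 0 ((V ⊗ₖ I) * B) (T ⊗ₖ I)
    Dop A B C (Vᵀ * (1 + T * Tᵀ)⁻¹ * V)
      = (fromRows C ((V ⊗ₖ I) * A))ᵀ * (1 + T' * T'ᵀ)⁻¹ * fromRows C ((V ⊗ₖ I) * A) := by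
  intro I T'
  simp only [I, T']
  rw [Dop, transpose_mul_inv_mul_kronecker_one, one_add_fromBlocks_zero_mul_transpose]
  set W := V ⊗ₖ (1 : Matrix (Fin r) (Fin r) ℝ)
  set S := T ⊗ₖ (1 : Matrix (Fin r) (Fin r) ℝ)
  set K := (1 + T * Tᵀ) ⊗ₖ (1 : Matrix (Fin r) (Fin r) ℝ)
  have hK_eq : K = 1 + S * Sᵀ := one_add_mul_transpose_kronecker_one T
  have hR : 1 + fromCols (W * B) S * (fromCols (W * B) S)ᵀ = K + W * (B * Bᵀ) * Wᵀ := by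
    rw [transpose_fromCols, fromCols_mul_fromRows, hK_eq, Matrix.transpose_mul]
    simp only [Matrix.mul_assoc]; abel
  have hM := (posDef_one_add_mul_transpose (fromCols (W * B) S)).isUnit
  have hK : IsUnit K := hK_eq ▸ (posDef_one_add_mul_transpose S).isUnit
  rw [fromRows_transpose_mul_inv_mul _ _ _ hM, hR, Matrix.mul_assoc Aᵀ,
    mul_inv_mul_mul_inv_one_add_mul _ _ _ _ hK (hR ▸ hM), add_comm, Matrix.transpose_mul]
  simp only [Matrix.mul_assoc]

theorem stmt7_general {n m l r : ℕ}
    (A : Matrix (Fin n × Fin r) (Fin n) ℝ)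
    (B : Matrix (Fin n × Fin r) (Fin m) ℝ)
    (C : Matrix (Fin l) (Fin n) ℝ)
    (Xseq : ℕ → Matrix (Fin n) (Fin n) ℝ)
    (h0 : Xseq 0 = 0)
    (hstep : ∀ t, Xseq (t + 1) = Dop A B C (Xseq t)) :
    ∀ t : ℕ, Xseq (t + 1) =
      (Vseq A C t)ᵀ * (1 + Tseq A B C t * (Tseq A B C t)ᵀ)⁻¹ * Vseq A C t := by
  intro t
  induction t with
  | zero => simp [hstep 0, h0, Dop, Vseq, Tseq]
  | succ t ih => rw [hstep, ih]; exact Dop_transpose_mul_inv_mul A B C _ _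

theorem stmt7 {n m l r : ℕ} (hn : 0 < n) (hm : 0 < m) (hl : 0 < l) (hr : 0 < r)
    (A : Matrix (Fin n × Fin r) (Fin n) ℝ)
    (B : Matrix (Fin n × Fin r) (Fin m) ℝ)
    (C : Matrix (Fin l) (Fin n) ℝ)
    (Xseq : ℕ → Matrix (Fin n) (Fin n) ℝ)
    (h0 : Xseq 0 = 0)
    (hstep : ∀ t, Xseq (t + 1) = Dop A B C (Xseq t)) :
    ∀ t : ℕ, Xseq (t + 1) =
      (Vseq A C t)ᵀ * (1 + Tseq A B C t * (Tseq A B C t)ᵀ)⁻¹ * Vseq A C t :=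
  stmt7_general A B C Xseq h0 hstep
end

section
/- With J = [[0, I_n],[−I_n, 0]] ∈ ℝ^{2n×2n} and J_s = [[0, I_{sn}],[−I_{sn}, 0]] ∈ ℝ^{2sn×2sn}, the pair (Θ, Φ) satisfies Θ J Θᵀ = [[0, A],[−Aᵀ, 0]] = Φ J_s Φᵀ; that is, every ⋉-SSF1 pair is a ⋉-symplectic pair (with the left semi-tensor products expanded via Kronecker products). -/
open Matrix
open scoped Kronecker

/-- Every ⋉-SSF1 pair `(Θ, Φ)` is a ⋉-symplectic pair:
`Θ J Θᵀ = [[0, A], [−Aᵀ, 0]] = Φ J_s Φᵀ` (with `sn` realized as `Fin n × Fin s`). -/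
theorem stmt8 {n s : ℕ} (hn : 0 < n) (hs : 0 < s)
    (A : Matrix (Fin n × Fin s) (Fin n) ℝ)
    (G : Matrix (Fin n × Fin s) (Fin n × Fin s) ℝ)
    (H : Matrix (Fin n) (Fin n) ℝ)
    (hG : Gᵀ = G) (hH : Hᵀ = H)
    (Θ : Matrix ((Fin n × Fin s) ⊕ Fin n) (Fin n ⊕ Fin n) ℝ)
    (Φ : Matrix ((Fin n × Fin s) ⊕ Fin n) ((Fin n × Fin s) ⊕ (Fin n × Fin s)) ℝ)
    (hΘ : Θ = Matrix.fromBlocks A 0 (-H) 1)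
    (hΦ : Φ = Matrix.fromBlocks 1 G 0 Aᵀ)
    (J : Matrix (Fin n ⊕ Fin n) (Fin n ⊕ Fin n) ℝ)
    (Js : Matrix ((Fin n × Fin s) ⊕ (Fin n × Fin s)) ((Fin n × Fin s) ⊕ (Fin n × Fin s)) ℝ)
    (hJ : J = Matrix.fromBlocks 0 1 (-1) 0)
    (hJs : Js = Matrix.fromBlocks 0 1 (-1) 0) :
    Θ * J * Θᵀ = Matrix.fromBlocks 0 A (-Aᵀ) 0 ∧
    Φ * Js * Φᵀ = Matrix.fromBlocks 0 A (-Aᵀ) 0 := by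
  subst hΘ hΦ hJ hJs
  constructor <;>
    simp [Matrix.fromBlocks_multiply, Matrix.fromBlocks_transpose, hH, hG]
end

section
/- The matrices Θ' and Φ' satisfy the ⋉-doubling compatibility identity Θ'Φ = Φ'(Θ ⊗ I_s) (i.e., Θ' ⋉ Φ = Φ' ⋉ Θ with the left semi-tensor products expanded via Kronecker products). -/
open Matrix
open scoped Kronecker

/-- ⋉-doubling compatibility: Θ′ Φ = Φ′ (Θ ⊗ I_s), where Θ = [[A,0],[−H,I]],
Φ = [[I,G],[0,Aᵀ]], and Θ ⊗ I_s is taken blockwise (the block form of the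
left semi-tensor product). -/
theorem stmt9 {n s : ℕ} (hn : 0 < n) (hs : 0 < s)
    (A : Matrix (Fin n × Fin s) (Fin n) ℝ)
    (G : Matrix (Fin n × Fin s) (Fin n × Fin s) ℝ)
    (H : Matrix (Fin n) (Fin n) ℝ)
    (hG : Gᵀ = G) (hH : Hᵀ = H)
    (hinv : IsUnit (1 + G * (H ⊗ₖ (1 : Matrix (Fin s) (Fin s) ℝ))))
    (Θp : Matrix (((Fin n × Fin s) × Fin s) ⊕ Fin n) ((Fin n × Fin s) ⊕ Fin n) ℝ)
    (Φp : Matrix (((Fin n × Fin s) × Fin s) ⊕ Fin n)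
        (((Fin n × Fin s) × Fin s) ⊕ (Fin n × Fin s)) ℝ)
    (hΘp : Θp = Matrix.fromBlocks
      ((A ⊗ₖ (1 : Matrix (Fin s) (Fin s) ℝ)) *
        (1 + G * (H ⊗ₖ (1 : Matrix (Fin s) (Fin s) ℝ)))⁻¹) 0
      (-(Aᵀ * (1 + (H ⊗ₖ (1 : Matrix (Fin s) (Fin s) ℝ)) * G)⁻¹ *
        (H ⊗ₖ (1 : Matrix (Fin s) (Fin s) ℝ)))) 1)
    (hΦp : Φp = Matrix.fromBlocks 1
      ((A ⊗ₖ (1 : Matrix (Fin s) (Fin s) ℝ)) * G *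
        (1 + (H ⊗ₖ (1 : Matrix (Fin s) (Fin s) ℝ)) * G)⁻¹) 0
      (Aᵀ * (1 + (H ⊗ₖ (1 : Matrix (Fin s) (Fin s) ℝ)) * G)⁻¹)) :
    Θp * Matrix.fromBlocks 1 G 0 Aᵀ =
      Φp * Matrix.fromBlocks (A ⊗ₖ (1 : Matrix (Fin s) (Fin s) ℝ)) 0
        (-(H ⊗ₖ (1 : Matrix (Fin s) (Fin s) ℝ))) 1 := by
  subst hΘp hΦp
  set K : Matrix (Fin n × Fin s) (Fin n × Fin s) ℝ :=
    H ⊗ₖ (1 : Matrix (Fin s) (Fin s) ℝ) with hK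
  set B : Matrix ((Fin n × Fin s) × Fin s) (Fin n × Fin s) ℝ :=
    A ⊗ₖ (1 : Matrix (Fin s) (Fin s) ℝ) with hB
  set M : Matrix (Fin n × Fin s) (Fin n × Fin s) ℝ := 1 + G * K with hM
  set N : Matrix (Fin n × Fin s) (Fin n × Fin s) ℝ := 1 + K * G with hN
  have hMdet : IsUnit M.det := (Matrix.isUnit_iff_isUnit_det M).mp hinv
  have hNdet : IsUnit N.det := by
    rw [hN, Matrix.det_one_add_mul_comm, ← hM]; exact hMdet
  have hMG : M * G = G * N := by rw [hM, hN]; noncomm_ring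
  have hMinv : M⁻¹ = 1 - G * N⁻¹ * K := by
    apply Matrix.inv_eq_right_inv
    have : M * (1 - G * N⁻¹ * K) = M - M * G * N⁻¹ * K := by noncomm_ring
    rw [this, hMG, Matrix.mul_assoc G N N⁻¹, Matrix.mul_nonsing_inv N hNdet,
      Matrix.mul_one, hM]
    noncomm_ring
  have hGN : M⁻¹ * G = G * N⁻¹ := by
    have h1 : M⁻¹ * (M * G) * N⁻¹ = G * N⁻¹ := by
      rw [Matrix.nonsing_inv_mul_cancel_left _ _ hMdet]
    rw [hMG, ← Matrix.mul_assoc, Matrix.mul_assoc (M⁻¹ * G) N N⁻¹,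
      Matrix.mul_nonsing_inv N hNdet, Matrix.mul_one] at h1
    exact h1
  have h1 : N⁻¹ * K * G = 1 - N⁻¹ := by
    have h2 : N⁻¹ * N = 1 := Matrix.nonsing_inv_mul N hNdet
    rw [hN, Matrix.mul_add, Matrix.mul_one, ← Matrix.mul_assoc] at h2
    linear_combination (norm := noncomm_ring) h2
  have h22 : -(Aᵀ * N⁻¹ * K * G) + Aᵀ = Aᵀ * N⁻¹ := by
    have h3 : Aᵀ * (N⁻¹ * K * G) = Aᵀ - Aᵀ * N⁻¹ := by
      rw [h1, Matrix.mul_sub, Matrix.mul_one]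
    rw [Matrix.mul_assoc (Aᵀ * N⁻¹) K G,
      Matrix.mul_assoc Aᵀ N⁻¹ (K * G), ← Matrix.mul_assoc N⁻¹ K G, h3]
    abel
  have e11 : B * M⁻¹ = B + -(B * G * N⁻¹ * K) := by
    rw [hMinv, Matrix.mul_sub, Matrix.mul_one, ← Matrix.mul_assoc,
      ← Matrix.mul_assoc, sub_eq_add_neg]
  have e12 : B * M⁻¹ * G = B * G * N⁻¹ := by
    rw [Matrix.mul_assoc, hGN, ← Matrix.mul_assoc]
  rw [Matrix.fromBlocks_multiply, Matrix.fromBlocks_multiply]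
  simp only [Matrix.mul_one, Matrix.one_mul, Matrix.mul_zero, Matrix.zero_mul,
    add_zero, zero_add, Matrix.mul_neg, Matrix.neg_mul]
  rw [e12, h22, e11]
end

section
/- The ⋉-doubling transformation preserves the first standard symplectic form: Θ'Θ = [[Â, 0],[−Ĥ, I_n]] ∈ ℝ^{(s²+1)n×2n} and Φ'(Φ ⊗ I_s) = [[I_{s²n}, Ĝ],[0, Âᵀ]] ∈ ℝ^{(s²+1)n×2s²n}, and the matrices Ĝ and Ĥ are symmetric; thus the doubled pair is again a ⋉-SSF1 pair, with parameter s² in place of s. -/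
open Matrix
open scoped Kronecker

/-- The ⋉-doubling transformation preserves the first standard symplectic form:
Θ′ Θ = [[Â,0],[−Ĥ,I]], Φ′ (Φ ⊗ I_s) = [[I,Ĝ],[0,Âᵀ]] (the Kronecker factor taken
blockwise), and Ĝ, Ĥ are symmetric. -/
theorem stmt10 {n s : ℕ} (hn : 0 < n) (hs : 0 < s)
    (A : Matrix (Fin n × Fin s) (Fin n) ℝ)
    (G : Matrix (Fin n × Fin s) (Fin n × Fin s) ℝ)
    (H : Matrix (Fin n) (Fin n) ℝ)
    (hG : Gᵀ = G) (hH : Hᵀ = H)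
    (hinv : IsUnit (1 + G * (H ⊗ₖ (1 : Matrix (Fin s) (Fin s) ℝ))))
    (Ah : Matrix ((Fin n × Fin s) × Fin s) (Fin n) ℝ)
    (Gh : Matrix ((Fin n × Fin s) × Fin s) ((Fin n × Fin s) × Fin s) ℝ)
    (Hh : Matrix (Fin n) (Fin n) ℝ)
    (hAh : Ah = (A ⊗ₖ (1 : Matrix (Fin s) (Fin s) ℝ)) *
        (1 + G * (H ⊗ₖ (1 : Matrix (Fin s) (Fin s) ℝ)))⁻¹ * A)
    (hGh : Gh = G ⊗ₖ (1 : Matrix (Fin s) (Fin s) ℝ) +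
        (A ⊗ₖ (1 : Matrix (Fin s) (Fin s) ℝ)) *
          (1 + G * (H ⊗ₖ (1 : Matrix (Fin s) (Fin s) ℝ)))⁻¹ * G *
          (Aᵀ ⊗ₖ (1 : Matrix (Fin s) (Fin s) ℝ)))
    (hHh : Hh = H + Aᵀ * (H ⊗ₖ (1 : Matrix (Fin s) (Fin s) ℝ)) *
        (1 + G * (H ⊗ₖ (1 : Matrix (Fin s) (Fin s) ℝ)))⁻¹ * A)
    (Θp : Matrix (((Fin n × Fin s) × Fin s) ⊕ Fin n) ((Fin n × Fin s) ⊕ Fin n) ℝ)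
    (Φp : Matrix (((Fin n × Fin s) × Fin s) ⊕ Fin n)
        (((Fin n × Fin s) × Fin s) ⊕ (Fin n × Fin s)) ℝ)
    (hΘp : Θp = Matrix.fromBlocks
      ((A ⊗ₖ (1 : Matrix (Fin s) (Fin s) ℝ)) *
        (1 + G * (H ⊗ₖ (1 : Matrix (Fin s) (Fin s) ℝ)))⁻¹) 0
      (-(Aᵀ * (1 + (H ⊗ₖ (1 : Matrix (Fin s) (Fin s) ℝ)) * G)⁻¹ *
        (H ⊗ₖ (1 : Matrix (Fin s) (Fin s) ℝ)))) 1)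
    (hΦp : Φp = Matrix.fromBlocks 1
      ((A ⊗ₖ (1 : Matrix (Fin s) (Fin s) ℝ)) * G *
        (1 + (H ⊗ₖ (1 : Matrix (Fin s) (Fin s) ℝ)) * G)⁻¹) 0
      (Aᵀ * (1 + (H ⊗ₖ (1 : Matrix (Fin s) (Fin s) ℝ)) * G)⁻¹)) :
    Θp * Matrix.fromBlocks A (0 : Matrix (Fin n × Fin s) (Fin n) ℝ) (-H)
        (1 : Matrix (Fin n) (Fin n) ℝ) =
      Matrix.fromBlocks Ah (0 : Matrix ((Fin n × Fin s) × Fin s) (Fin n) ℝ) (-Hh)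
        (1 : Matrix (Fin n) (Fin n) ℝ) ∧
    Φp * Matrix.fromBlocks
        (1 : Matrix ((Fin n × Fin s) × Fin s) ((Fin n × Fin s) × Fin s) ℝ)
        (G ⊗ₖ (1 : Matrix (Fin s) (Fin s) ℝ))
        (0 : Matrix (Fin n × Fin s) ((Fin n × Fin s) × Fin s) ℝ)
        (Aᵀ ⊗ₖ (1 : Matrix (Fin s) (Fin s) ℝ)) =
      Matrix.fromBlocks 1 Gh 0 Ahᵀ ∧
    Ghᵀ = Gh ∧ Hhᵀ = Hh := by
  set K : Matrix (Fin n × Fin s) (Fin n × Fin s) ℝ := H ⊗ₖ (1 : Matrix (Fin s) (Fin s) ℝ) with hKdef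
  have hKT : Kᵀ = K := by
    rw [hKdef, ← Matrix.kroneckerMap_transpose, hH, Matrix.transpose_one]
  set M : Matrix (Fin n × Fin s) (Fin n × Fin s) ℝ := 1 + G * K with hMdef
  set N : Matrix (Fin n × Fin s) (Fin n × Fin s) ℝ := 1 + K * G with hNdef
  have hMT : Mᵀ = N := by
    rw [hMdef, hNdef, Matrix.transpose_add, Matrix.transpose_one, Matrix.transpose_mul, hKT, hG]
  have hMdet : IsUnit M.det := (Matrix.isUnit_iff_isUnit_det M).mp hinv
  have hNdet : IsUnit N.det := by
    rw [← hMT, Matrix.det_transpose]; exact hMdet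
  have hMinvT : M⁻¹ᵀ = N⁻¹ := by rw [Matrix.transpose_nonsing_inv, hMT]
  have hMG : M * G = G * N := by
    rw [hMdef, hNdef, add_mul, mul_add, one_mul, mul_one, mul_assoc]
  have hGN : G * N⁻¹ = M⁻¹ * G := by
    calc G * N⁻¹ = M⁻¹ * M * G * N⁻¹ := by
          rw [Matrix.nonsing_inv_mul M hMdet, one_mul]
      _ = M⁻¹ * (G * N) * N⁻¹ := by rw [mul_assoc M⁻¹, hMG]
      _ = M⁻¹ * G * (N * N⁻¹) := by rw [mul_assoc, mul_assoc, mul_assoc]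
      _ = M⁻¹ * G := by rw [Matrix.mul_nonsing_inv N hNdet, mul_one]
  have hKM : K * M = N * K := by
    rw [hMdef, hNdef, add_mul, mul_add, one_mul, mul_one, mul_assoc]
  have hKMi : K * M⁻¹ = N⁻¹ * K := by
    calc K * M⁻¹ = N⁻¹ * N * K * M⁻¹ := by
          rw [Matrix.nonsing_inv_mul N hNdet, one_mul]
      _ = N⁻¹ * (K * M) * M⁻¹ := by rw [mul_assoc N⁻¹, hKM]
      _ = N⁻¹ * K * (M * M⁻¹) := by rw [mul_assoc, mul_assoc, mul_assoc]
      _ = N⁻¹ * K := by rw [Matrix.mul_nonsing_inv M hMdet, mul_one]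
  have key1 : Aᵀ * N⁻¹ * K = Aᵀ * K * M⁻¹ := by
    rw [Matrix.mul_assoc, ← hKMi, Matrix.mul_assoc]
  have key2 : (A ⊗ₖ (1 : Matrix (Fin s) (Fin s) ℝ)) * G * N⁻¹ =
      (A ⊗ₖ (1 : Matrix (Fin s) (Fin s) ℝ)) * M⁻¹ * G := by
    rw [Matrix.mul_assoc, hGN, ← Matrix.mul_assoc]
  refine ⟨?_, ?_, ?_, ?_⟩
  · rw [hΘp, Matrix.fromBlocks_multiply]
    refine Matrix.fromBlocks_inj.mpr ⟨?_, ?_, ?_, ?_⟩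
    · simp [hAh]
    · simp
    · rw [hHh, key1, neg_add, one_mul, Matrix.neg_mul, add_comm]
    · simp
  · rw [hΦp, Matrix.fromBlocks_multiply]
    refine Matrix.fromBlocks_inj.mpr ⟨?_, ?_, ?_, ?_⟩
    · simp
    · rw [hGh, one_mul, key2]
    · simp
    · rw [hAh, Matrix.transpose_mul, Matrix.transpose_mul, hMinvT,
        ← Matrix.kroneckerMap_transpose, Matrix.transpose_one, Matrix.zero_mul, zero_add, Matrix.mul_assoc]
  · rw [hGh, Matrix.transpose_add, ← Matrix.kroneckerMap_transpose, hG, Matrix.transpose_one]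
    congr 1
    rw [Matrix.transpose_mul, Matrix.transpose_mul, Matrix.transpose_mul, hG, hMinvT,
      ← Matrix.kroneckerMap_transpose, ← Matrix.kroneckerMap_transpose,
      Matrix.transpose_transpose, Matrix.transpose_one]
    simp only [← Matrix.mul_assoc]
    rw [key2]
  · rw [hHh, Matrix.transpose_add, hH]
    congr 1
    rw [Matrix.transpose_mul, Matrix.transpose_mul, Matrix.transpose_mul, hMinvT,
      Matrix.transpose_transpose, hKT]
    simp only [← Matrix.mul_assoc]
    rw [key1]
end

section
/- Let P ∈ ℝ^{sn×n}, U ∈ ℝ^{sn×a}, V ∈ ℝ^{b×n}, T ∈ ℝ^{b×a}, and define A₁ = P − U(I_a + TᵀT)⁻¹TᵀV, G₁ = U(I_a + TᵀT)⁻¹Uᵀ, H₁ = Vᵀ(I_b + TTᵀ)⁻¹V. Define P₂ = (P ⊗ I_s)P ∈ ℝ^{s²n×n}, U₂ = [(P ⊗ I_s)U, U ⊗ I_s] ∈ ℝ^{s²n×(a+sa)}, V₂ = [V ; (V ⊗ I_s)P] ∈ ℝ^{(b+sb)×n}, W = (V ⊗ I_s)U ∈ ℝ^{sb×a}, and T₂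 = [[T, 0_{b×sa}],[W, T ⊗ I_s]] ∈ ℝ^{(b+sb)×(a+sa)}. Then I_{sn} + G₁(H₁ ⊗ I_s) is invertible and one doubling step reproduces the same closed forms: (A₁ ⊗ I_s)(I_{sn} + G₁(H₁ ⊗ I_s))⁻¹A₁ = P₂ − U₂(I + T₂ᵀT₂)⁻¹T₂ᵀV₂, G₁ ⊗ I_s + (A₁ ⊗ I_s)(I_{sn} + G₁(H₁ ⊗ I_s))⁻¹G₁(A₁ᵀ ⊗ I_s) = U₂(I + T₂ᵀT₂)⁻¹U₂ᵀ, and H₁ + A₁ᵀ(H₁ ⊗ I_s)(I_{sn} + G₁(H₁ ⊗ I_s))⁻¹A₁ = V₂ᵀ(I + T₂T₂ᵀ)⁻¹V₂ (the inductive step identifying the doubling iterates with the closed-form expressions of the fixed-point iterates). -/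
open Matrix
open scoped Kronecker
set_option linter.unusedSectionVars false
namespace Stmt12Aux

set_option linter.unusedSectionVars false
variable {s : ℕ} {m k l : Type*} [Fintype m] [Fintype k] [Fintype l]

lemma kmul (A : Matrix m k ℝ) (B : Matrix k l ℝ) :
    (A * B) ⊗ₖ (1 : Matrix (Fin s) (Fin s) ℝ)
      = (A ⊗ₖ (1 : Matrix (Fin s) (Fin s) ℝ)) * (B ⊗ₖ (1 : Matrix (Fin s) (Fin s) ℝ)) := by
  rw [← Matrix.mul_kronecker_mul, Matrix.one_mul]

lemma ktrans (A : Matrix m k ℝ) :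
    Aᵀ ⊗ₖ (1 : Matrix (Fin s) (Fin s) ℝ) = (A ⊗ₖ (1 : Matrix (Fin s) (Fin s) ℝ))ᵀ := by
  conv_lhs => rw [← Matrix.transpose_one (α := ℝ) (n := Fin s)]
  exact Matrix.kroneckerMap_transpose _ _ _

lemma ksub (A B : Matrix m k ℝ) :
    (A - B) ⊗ₖ (1 : Matrix (Fin s) (Fin s) ℝ)
      = A ⊗ₖ (1 : Matrix (Fin s) (Fin s) ℝ) - B ⊗ₖ (1 : Matrix (Fin s) (Fin s) ℝ) := by
  ext ⟨i, i'⟩ ⟨j, j'⟩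
  simp [Matrix.sub_apply, sub_mul]

lemma kadd (A B : Matrix m k ℝ) :
    (A + B) ⊗ₖ (1 : Matrix (Fin s) (Fin s) ℝ)
      = A ⊗ₖ (1 : Matrix (Fin s) (Fin s) ℝ) + B ⊗ₖ (1 : Matrix (Fin s) (Fin s) ℝ) :=
  Matrix.add_kronecker A B 1

lemma kone [DecidableEq m] :
    (1 : Matrix m m ℝ) ⊗ₖ (1 : Matrix (Fin s) (Fin s) ℝ) = 1 :=
  Matrix.one_kronecker_one

lemma psdTT (A : Matrix m k ℝ) : (Aᵀ * A).PosSemidef := by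
  simpa [Matrix.conjTranspose_eq_transpose_of_trivial] using
    Matrix.posSemidef_conjTranspose_mul_self A

lemma psdTT' (A : Matrix m k ℝ) : (A * Aᵀ).PosSemidef := by
  simpa [Matrix.conjTranspose_eq_transpose_of_trivial] using
    Matrix.posSemidef_self_mul_conjTranspose A

lemma psdConj {A : Matrix k k ℝ} (hA : A.PosSemidef) (B : Matrix k m ℝ) :
    (Bᵀ * A * B).PosSemidef := by
  simpa [Matrix.conjTranspose_eq_transpose_of_trivial] using hA.conjTranspose_mul_mul_same B

lemma pd1 [DecidableEq m] {C : Matrix m m ℝ} (hC : C.PosSemidef) : (1 + C).PosDef :=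
  Matrix.PosDef.add_posSemidef Matrix.PosDef.one hC

end Stmt12Aux

set_option maxHeartbeats 2000000 in
/-- The inductive step identifying the doubling iterates with the closed-form
expressions of the fixed-point iterates (with `sn` realized as `Fin n × Fin s`
and `s²n` as `(Fin n × Fin s) × Fin s`). -/
theorem stmt12 {n s a b : ℕ} (hn : 0 < n) (hs : 0 < s) (ha : 0 < a) (hb : 0 < b)
    (P : Matrix (Fin n × Fin s) (Fin n) ℝ)
    (U : Matrix (Fin n × Fin s) (Fin a) ℝ)
    (V : Matrix (Fin b) (Fin n) ℝ)
    (T : Matrix (Fin b) (Fin a) ℝ)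
    (A₁ : Matrix (Fin n × Fin s) (Fin n) ℝ)
    (G₁ : Matrix (Fin n × Fin s) (Fin n × Fin s) ℝ)
    (H₁ : Matrix (Fin n) (Fin n) ℝ)
    (hA₁ : A₁ = P - U * (1 + Tᵀ * T)⁻¹ * Tᵀ * V)
    (hG₁ : G₁ = U * (1 + Tᵀ * T)⁻¹ * Uᵀ)
    (hH₁ : H₁ = Vᵀ * (1 + T * Tᵀ)⁻¹ * V)
    (P₂ : Matrix ((Fin n × Fin s) × Fin s) (Fin n) ℝ)
    (U₂ : Matrix ((Fin n × Fin s) × Fin s) (Fin a ⊕ Fin a × Fin s) ℝ)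
    (V₂ : Matrix (Fin b ⊕ Fin b × Fin s) (Fin n) ℝ)
    (T₂ : Matrix (Fin b ⊕ Fin b × Fin s) (Fin a ⊕ Fin a × Fin s) ℝ)
    (hP₂ : P₂ = (P ⊗ₖ (1 : Matrix (Fin s) (Fin s) ℝ)) * P)
    (hU₂ : U₂ = Matrix.fromCols ((P ⊗ₖ (1 : Matrix (Fin s) (Fin s) ℝ)) * U)
        (U ⊗ₖ (1 : Matrix (Fin s) (Fin s) ℝ)))
    (hV₂ : V₂ = Matrix.fromRows V ((V ⊗ₖ (1 : Matrix (Fin s) (Fin s) ℝ)) * P))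
    (hT₂ : T₂ = Matrix.fromBlocks T (0 : Matrix (Fin b) (Fin a × Fin s) ℝ)
        ((V ⊗ₖ (1 : Matrix (Fin s) (Fin s) ℝ)) * U)
        (T ⊗ₖ (1 : Matrix (Fin s) (Fin s) ℝ))) :
    IsUnit (1 + G₁ * (H₁ ⊗ₖ (1 : Matrix (Fin s) (Fin s) ℝ))) ∧
    (A₁ ⊗ₖ (1 : Matrix (Fin s) (Fin s) ℝ)) *
        (1 + G₁ * (H₁ ⊗ₖ (1 : Matrix (Fin s) (Fin s) ℝ)))⁻¹ * A₁ =
      P₂ - U₂ * (1 + T₂ᵀ * T₂)⁻¹ * T₂ᵀ * V₂ ∧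
    G₁ ⊗ₖ (1 : Matrix (Fin s) (Fin s) ℝ) +
        (A₁ ⊗ₖ (1 : Matrix (Fin s) (Fin s) ℝ)) *
          (1 + G₁ * (H₁ ⊗ₖ (1 : Matrix (Fin s) (Fin s) ℝ)))⁻¹ * G₁ *
          (A₁ᵀ ⊗ₖ (1 : Matrix (Fin s) (Fin s) ℝ)) =
      U₂ * (1 + T₂ᵀ * T₂)⁻¹ * U₂ᵀ ∧
    H₁ + A₁ᵀ * (H₁ ⊗ₖ (1 : Matrix (Fin s) (Fin s) ℝ)) *
        (1 + G₁ * (H₁ ⊗ₖ (1 : Matrix (Fin s) (Fin s) ℝ)))⁻¹ * A₁ =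
      V₂ᵀ * (1 + T₂ * T₂ᵀ)⁻¹ * V₂ := by
  classical
  open Stmt12Aux in
  -- level-1 abbreviations
  obtain ⟨K, hKdef⟩ : ∃ X, X = 1 + Tᵀ * T := ⟨_, rfl⟩
  obtain ⟨L, hLdef⟩ : ∃ X, X = 1 + T * Tᵀ := ⟨_, rfl⟩
  rw [← hKdef] at hA₁ hG₁
  rw [← hLdef] at hH₁
  have hKpd : K.PosDef := by rw [hKdef]; exact pd1 (psdTT T)
  have hLpd : L.PosDef := by rw [hLdef]; exact pd1 (psdTT' T)
  have hKd : IsUnit K.det := (Matrix.isUnit_iff_isUnit_det K).mp hKpd.isUnit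
  have hLd : IsUnit L.det := (Matrix.isUnit_iff_isUnit_det L).mp hLpd.isUnit
  have hK1 : K * K⁻¹ = 1 := Matrix.mul_nonsing_inv _ hKd
  have hK2 : K⁻¹ * K = 1 := Matrix.nonsing_inv_mul _ hKd
  have hL1 : L * L⁻¹ = 1 := Matrix.mul_nonsing_inv _ hLd
  have hL2 : L⁻¹ * L = 1 := Matrix.nonsing_inv_mul _ hLd
  have cK1 : ∀ {q : Type} (M : Matrix (Fin a) q ℝ), K * (K⁻¹ * M) = M := fun M => by
    rw [← Matrix.mul_assoc, hK1, Matrix.one_mul]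
  have cK2 : ∀ {q : Type} (M : Matrix (Fin a) q ℝ), K⁻¹ * (K * M) = M := fun M => by
    rw [← Matrix.mul_assoc, hK2, Matrix.one_mul]
  have cL1 : ∀ {q : Type} (M : Matrix (Fin b) q ℝ), L * (L⁻¹ * M) = M := fun M => by
    rw [← Matrix.mul_assoc, hL1, Matrix.one_mul]
  have cL2 : ∀ {q : Type} (M : Matrix (Fin b) q ℝ), L⁻¹ * (L * M) = M := fun M => by
    rw [← Matrix.mul_assoc, hL2, Matrix.one_mul]
  have hKsym : Kᵀ = K := by
    rw [hKdef]; simp [Matrix.transpose_add, Matrix.transpose_mul]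
  have hLsym : Lᵀ = L := by
    rw [hLdef]; simp [Matrix.transpose_add, Matrix.transpose_mul]
  have hTK : T * K = L * T := by
    rw [hKdef, hLdef]
    simp [Matrix.mul_add, Matrix.add_mul, Matrix.mul_assoc]
  have hTKi : T * K⁻¹ = L⁻¹ * T := by
    have h : L * (T * K⁻¹) = T := by
      rw [← Matrix.mul_assoc, ← hTK, Matrix.mul_assoc, hK1, Matrix.mul_one]
    calc T * K⁻¹ = L⁻¹ * (L * (T * K⁻¹)) := (cL2 _).symm
    _ = L⁻¹ * T := by rw [h]
  have hKiT : K⁻¹ * Tᵀ = Tᵀ * L⁻¹ := by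
    have h := congrArg Matrix.transpose hTKi
    simpa [Matrix.transpose_mul, Matrix.transpose_nonsing_inv, hKsym, hLsym] using h
  -- resolvent identities
  have hTT : T * (K⁻¹ * Tᵀ) + L⁻¹ = 1 := by
    rw [hKiT, ← Matrix.mul_assoc]
    have h : T * Tᵀ = L - 1 := by rw [hLdef, add_sub_cancel_left]
    rw [h, Matrix.sub_mul, hL1, Matrix.one_mul, sub_add_cancel]
  have hTT' : Tᵀ * (L⁻¹ * T) + K⁻¹ = 1 := by
    have h : Tᵀ * T = K - 1 := by rw [hKdef, add_sub_cancel_left]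
    rw [← Matrix.mul_assoc, ← hKiT, Matrix.mul_assoc, h, Matrix.mul_sub, hK2, Matrix.mul_one,
      sub_add_cancel]
  -- level-2 abbreviations
  obtain ⟨Pk, hPkdef⟩ : ∃ X, X = P ⊗ₖ (1 : Matrix (Fin s) (Fin s) ℝ) := ⟨_, rfl⟩
  obtain ⟨Uk, hUkdef⟩ : ∃ X, X = U ⊗ₖ (1 : Matrix (Fin s) (Fin s) ℝ) := ⟨_, rfl⟩
  obtain ⟨Vk, hVkdef⟩ : ∃ X, X = V ⊗ₖ (1 : Matrix (Fin s) (Fin s) ℝ) := ⟨_, rfl⟩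
  obtain ⟨Tk, hTkdef⟩ : ∃ X, X = T ⊗ₖ (1 : Matrix (Fin s) (Fin s) ℝ) := ⟨_, rfl⟩
  rw [← hPkdef] at hP₂ hU₂
  rw [← hUkdef] at hU₂
  rw [← hVkdef] at hV₂ hT₂
  rw [← hTkdef] at hT₂
  obtain ⟨Hk, hHkdef⟩ : ∃ X, X = H₁ ⊗ₖ (1 : Matrix (Fin s) (Fin s) ℝ) := ⟨_, rfl⟩
  obtain ⟨Ak, hAkdef⟩ : ∃ X, X = A₁ ⊗ₖ (1 : Matrix (Fin s) (Fin s) ℝ) := ⟨_, rfl⟩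
  obtain ⟨Gk, hGkdef⟩ : ∃ X, X = G₁ ⊗ₖ (1 : Matrix (Fin s) (Fin s) ℝ) := ⟨_, rfl⟩
  obtain ⟨Atk, hAtkdef⟩ : ∃ X, X = A₁ᵀ ⊗ₖ (1 : Matrix (Fin s) (Fin s) ℝ) := ⟨_, rfl⟩
  rw [← hHkdef, ← hAkdef, ← hGkdef, ← hAtkdef]
  obtain ⟨Ki, hKidef⟩ : ∃ X, X = K⁻¹ ⊗ₖ (1 : Matrix (Fin s) (Fin s) ℝ) := ⟨_, rfl⟩
  obtain ⟨Li, hLidef⟩ : ∃ X, X = L⁻¹ ⊗ₖ (1 : Matrix (Fin s) (Fin s) ℝ) := ⟨_, rfl⟩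
  obtain ⟨KK, hKKdef⟩ : ∃ X, X = K ⊗ₖ (1 : Matrix (Fin s) (Fin s) ℝ) := ⟨_, rfl⟩
  obtain ⟨LK, hLKdef⟩ : ∃ X, X = L ⊗ₖ (1 : Matrix (Fin s) (Fin s) ℝ) := ⟨_, rfl⟩
  have hAtk : Atk = Akᵀ := by rw [hAtkdef, hAkdef]; exact ktrans A₁
  have hKK1 : KK * Ki = 1 := by rw [hKKdef, hKidef, ← kmul, hK1, kone]
  have hKK2 : Ki * KK = 1 := by rw [hKKdef, hKidef, ← kmul, hK2, kone]
  have hLK1 : LK * Li = 1 := by rw [hLKdef, hLidef, ← kmul, hL1, kone]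
  have hLK2 : Li * LK = 1 := by rw [hLKdef, hLidef, ← kmul, hL2, kone]
  have hKKblock : KK = 1 + Tkᵀ * Tk := by
    rw [hKKdef, hKdef, kadd, kone, kmul, ktrans, ← hTkdef]
  have hLKblock : LK = 1 + Tk * Tkᵀ := by
    rw [hLKdef, hLdef, kadd, kone, kmul, ktrans, ← hTkdef]
  have hKisym : K⁻¹ᵀ = K⁻¹ := by rw [Matrix.transpose_nonsing_inv, hKsym]
  have hLisym : L⁻¹ᵀ = L⁻¹ := by rw [Matrix.transpose_nonsing_inv, hLsym]
  -- lifted identities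
  have hHkV : Hk = Vkᵀ * (Li * Vk) := by
    rw [hHkdef, hH₁, kmul, kmul, ktrans, ← hVkdef, ← hLidef, Matrix.mul_assoc]
  have hAkblock : Ak = Pk - Uk * (Ki * (Tkᵀ * Vk)) := by
    rw [hAkdef, hA₁, ksub, kmul, kmul, kmul, ktrans, ← hPkdef, ← hUkdef, ← hKidef, ← hVkdef,
      ← hTkdef, Matrix.mul_assoc, Matrix.mul_assoc]
  have hGkblock : Gk = Uk * (Ki * Ukᵀ) := by
    rw [hGkdef, hG₁, kmul, kmul, ktrans, ← hUkdef, ← hKidef, Matrix.mul_assoc]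
  have hTTk : Tk * (Ki * Tkᵀ) + Li = 1 := by
    have h := congrArg (fun M => M ⊗ₖ (1 : Matrix (Fin s) (Fin s) ℝ)) hTT
    simpa only [kadd, kone, kmul, ktrans, ← hTkdef, ← hKidef, ← hLidef] using h
  -- the low-rank core matrices
  obtain ⟨W, hWdef⟩ : ∃ X, X = Vk * U := ⟨_, rfl⟩
  rw [← hWdef] at hT₂
  have hWfold : Vk * U = W := hWdef.symm
  have hWtfold : Uᵀ * Vkᵀ = Wᵀ := by rw [hWdef, Matrix.transpose_mul]
  obtain ⟨Z, hZdef⟩ : ∃ X, X = K + Wᵀ * (Li * W) := ⟨_, rfl⟩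
  obtain ⟨Y, hYdef⟩ : ∃ X, X = LK + W * (K⁻¹ * Wᵀ) := ⟨_, rfl⟩
  have hLKpd : LK.PosDef := by rw [hLKblock]; exact pd1 (psdTT' Tk)
  have hLKinv : LK⁻¹ = Li := Matrix.inv_eq_right_inv hLK1
  have hLipd : Li.PosDef := hLKinv ▸ hLKpd.inv
  have hZpd : Z.PosDef := by
    rw [hZdef, hKdef, add_assoc]
    exact pd1 ((psdTT T).add (by simpa [Matrix.mul_assoc] using psdConj hLipd.posSemidef W))
  have hYpd : Y.PosDef := by
    rw [hYdef, hLKblock, add_assoc]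
    refine pd1 ((psdTT' Tk).add ?_)
    simpa [Matrix.mul_assoc, Matrix.transpose_transpose] using psdConj hKpd.inv.posSemidef Wᵀ
  have hZd : IsUnit Z.det := (Matrix.isUnit_iff_isUnit_det Z).mp hZpd.isUnit
  have hYd : IsUnit Y.det := (Matrix.isUnit_iff_isUnit_det Y).mp hYpd.isUnit
  have hZ1 : Z * Z⁻¹ = 1 := Matrix.mul_nonsing_inv _ hZd
  have hZ2 : Z⁻¹ * Z = 1 := Matrix.nonsing_inv_mul _ hZd
  have hY1 : Y * Y⁻¹ = 1 := Matrix.mul_nonsing_inv _ hYd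
  have hY2 : Y⁻¹ * Y = 1 := Matrix.nonsing_inv_mul _ hYd
  have cZ1 : ∀ {q : Type} (M : Matrix (Fin a) q ℝ), Z * (Z⁻¹ * M) = M := fun M => by
    rw [← Matrix.mul_assoc, hZ1, Matrix.one_mul]
  have cZ2 : ∀ {q : Type} (M : Matrix (Fin a) q ℝ), Z⁻¹ * (Z * M) = M := fun M => by
    rw [← Matrix.mul_assoc, hZ2, Matrix.one_mul]
  have cY1 : ∀ {q : Type} (M : Matrix (Fin b × Fin s) q ℝ), Y * (Y⁻¹ * M) = M := fun M => by
    rw [← Matrix.mul_assoc, hY1, Matrix.one_mul]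
  have cY2 : ∀ {q : Type} (M : Matrix (Fin b × Fin s) q ℝ), Y⁻¹ * (Y * M) = M := fun M => by
    rw [← Matrix.mul_assoc, hY2, Matrix.one_mul]
  have cKK1 : ∀ {q : Type} (M : Matrix (Fin a × Fin s) q ℝ), KK * (Ki * M) = M := fun M => by
    rw [← Matrix.mul_assoc, hKK1, Matrix.one_mul]
  have cKK2 : ∀ {q : Type} (M : Matrix (Fin a × Fin s) q ℝ), Ki * (KK * M) = M := fun M => by
    rw [← Matrix.mul_assoc, hKK2, Matrix.one_mul]
  have cLK1 : ∀ {q : Type} (M : Matrix (Fin b × Fin s) q ℝ), LK * (Li * M) = M := fun M => by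
    rw [← Matrix.mul_assoc, hLK1, Matrix.one_mul]
  have cLK2 : ∀ {q : Type} (M : Matrix (Fin b × Fin s) q ℝ), Li * (LK * M) = M := fun M => by
    rw [← Matrix.mul_assoc, hLK2, Matrix.one_mul]
  -- collapse rules
  have cVU : ∀ {q : Type} (M : Matrix (Fin a) q ℝ), Vk * (U * M) = W * M := fun M => by
    rw [← Matrix.mul_assoc, hWfold]
  have cUVt : ∀ {q : Type} (M : Matrix (Fin b × Fin s) q ℝ), Uᵀ * (Vkᵀ * M) = Wᵀ * M :=
    fun M => by rw [← Matrix.mul_assoc, hWtfold]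
  have cKiT : ∀ {q : Type} (M : Matrix (Fin b) q ℝ), K⁻¹ * (Tᵀ * M) = Tᵀ * (L⁻¹ * M) :=
    fun M => by rw [← Matrix.mul_assoc, hKiT, Matrix.mul_assoc]
  have cTKi : ∀ {q : Type} (M : Matrix (Fin a) q ℝ), T * (K⁻¹ * M) = L⁻¹ * (T * M) :=
    fun M => by rw [← Matrix.mul_assoc, hTKi, Matrix.mul_assoc]
  have cTLT : ∀ {q : Type} (M : Matrix (Fin a) q ℝ),
      Tᵀ * (L⁻¹ * (T * M)) = M - K⁻¹ * M := fun M => by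
    have h : Tᵀ * (L⁻¹ * T) = 1 - K⁻¹ := by rw [← hTT']; abel
    rw [← Matrix.mul_assoc, ← Matrix.mul_assoc, Matrix.mul_assoc Tᵀ L⁻¹ T, h, Matrix.sub_mul,
      Matrix.one_mul]
  have cTKT : ∀ {q : Type} (M : Matrix (Fin b × Fin s) q ℝ),
      Tk * (Ki * (Tkᵀ * M)) = M - Li * M := fun M => by
    have h : Tk * (Ki * Tkᵀ) = 1 - Li := by rw [← hTTk]; abel
    rw [← Matrix.mul_assoc, ← Matrix.mul_assoc, Matrix.mul_assoc Tk Ki Tkᵀ, h, Matrix.sub_mul,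
      Matrix.one_mul]
  have cWLW : ∀ {q : Type} (M : Matrix (Fin a) q ℝ),
      Wᵀ * (Li * (W * M)) = Z * M - K * M := fun M => by
    rw [hZdef, Matrix.add_mul, add_sub_cancel_left]
    simp only [Matrix.mul_assoc, cVU]
  have cWKW : ∀ {q : Type} (M : Matrix (Fin b × Fin s) q ℝ),
      W * (K⁻¹ * (Wᵀ * M)) = Y * M - LK * M := fun M => by
    rw [hYdef, Matrix.add_mul, add_sub_cancel_left]
    simp only [Matrix.mul_assoc, cVU]
  -- the resolvent of the doubling step
  have hKit : Kiᵀ = Ki := by rw [hKidef, ← ktrans, hKisym]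
  have hLit : Liᵀ = Li := by rw [hLidef, ← ktrans, hLisym]
  obtain ⟨C, hCdef⟩ : ∃ X, X = Wᵀ * (Li * Vk) := ⟨_, rfl⟩
  have hGH : G₁ * Hk = U * (K⁻¹ * C) := by
    rw [hG₁, hHkV, hCdef]
    simp only [Matrix.mul_assoc, cUVt]
  have cCU : ∀ {q : Type} (M : Matrix (Fin a) q ℝ), C * (U * M) = Z * M - K * M := fun M => by
    rw [hCdef]
    simp only [Matrix.mul_assoc, cVU]
    exact cWLW M
  obtain ⟨D, hDdef⟩ : ∃ X, X = 1 - U * (Z⁻¹ * C) := ⟨_, rfl⟩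
  have hXD : (1 + G₁ * Hk) * D = 1 := by
    rw [hDdef, hGH]
    simp only [Matrix.mul_sub, Matrix.sub_mul, Matrix.mul_add, Matrix.add_mul, Matrix.mul_one,
      Matrix.one_mul, Matrix.mul_assoc, cCU, cZ1, cZ2, cK1, cK2, Matrix.mul_sub]
    abel
  have hDX : D * (1 + G₁ * Hk) = 1 := by
    rw [hDdef, hGH]
    simp only [Matrix.mul_sub, Matrix.sub_mul, Matrix.mul_add, Matrix.add_mul, Matrix.mul_one,
      Matrix.one_mul, Matrix.mul_assoc, cCU, cZ1, cZ2, cK1, cK2, Matrix.mul_sub]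
    abel
  have hXinv : (1 + G₁ * Hk)⁻¹ = D := Matrix.inv_eq_right_inv hXD
  have hXunit : IsUnit (1 + G₁ * Hk) := ⟨⟨1 + G₁ * Hk, D, hXD, hDX⟩, rfl⟩
  have g2 : D * G₁ = U * (Z⁻¹ * Uᵀ) := by
    rw [hDdef, hG₁]
    simp only [Matrix.sub_mul, Matrix.one_mul, Matrix.mul_assoc, cCU, cZ2, cK1, Matrix.mul_sub]
    abel
  have hYinv : Y⁻¹ = Li - Li * (W * (Z⁻¹ * (Wᵀ * Li))) := by
    refine Matrix.inv_eq_left_inv ?_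
    rw [hYdef]
    simp only [Matrix.mul_sub, Matrix.sub_mul, Matrix.mul_add, Matrix.add_mul, Matrix.mul_one,
      Matrix.one_mul, Matrix.mul_assoc, hLK2, cWLW, cZ2, cK1, Matrix.mul_sub]
    abel
  have g3 : Hk * D = Vkᵀ * (Y⁻¹ * Vk) := by
    rw [hYinv, hDdef, hHkV, hCdef]
    simp only [Matrix.mul_sub, Matrix.sub_mul, Matrix.mul_one, Matrix.one_mul,
      Matrix.mul_assoc, cVU]
  -- block form of 1 + T₂ᵀT₂ and its inverse
  have hK₂ : 1 + T₂ᵀ * T₂ = Matrix.fromBlocks (K + Wᵀ * W) (Wᵀ * Tk) (Tkᵀ * W) KK := by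
    rw [hT₂, Matrix.fromBlocks_transpose, Matrix.fromBlocks_multiply, ← Matrix.fromBlocks_one,
      Matrix.fromBlocks_add]
    simp only [Matrix.transpose_zero, Matrix.zero_mul, Matrix.mul_zero, add_zero, zero_add,
      hKdef, hKKblock, add_assoc]
  obtain ⟨K2i, hK2idef⟩ : ∃ X, X = Matrix.fromBlocks Z⁻¹ (-(Z⁻¹ * (Wᵀ * (Tk * Ki))))
      (-(Ki * (Tkᵀ * (W * Z⁻¹))))
      (Ki + Ki * (Tkᵀ * (W * (Z⁻¹ * (Wᵀ * (Tk * Ki)))))) := ⟨_, rfl⟩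
  have hK₂inv : (1 + T₂ᵀ * T₂)⁻¹ = K2i := by
    refine Matrix.inv_eq_right_inv ?_
    rw [hK₂, hK2idef, Matrix.fromBlocks_multiply, ← Matrix.fromBlocks_one]
    rw [Matrix.fromBlocks_inj]
    refine ⟨?_, ?_, ?_, ?_⟩
    · simp only [Matrix.mul_neg, Matrix.mul_add, Matrix.add_mul, Matrix.mul_assoc, cTKT,
        Matrix.mul_sub, cWLW, hZ1, cZ1, cZ2, cK1, cK2, Matrix.mul_one, Matrix.one_mul]
      abel
    · simp only [Matrix.mul_neg, Matrix.mul_add, Matrix.add_mul, Matrix.mul_assoc, cTKT,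
        Matrix.mul_sub, cWLW, hZ1, cZ1, cZ2, cK1, cK2, cKK1, cKK2, Matrix.mul_one,
        Matrix.one_mul]
      abel
    · simp only [Matrix.mul_neg, Matrix.mul_add, Matrix.add_mul, Matrix.mul_assoc, cTKT,
        Matrix.mul_sub, cWLW, hZ1, cZ1, cZ2, cK1, cK2, cKK1, cKK2, Matrix.mul_one,
        Matrix.one_mul]
      abel
    · simp only [Matrix.mul_neg, Matrix.mul_add, Matrix.add_mul, Matrix.mul_assoc, cTKT,
        Matrix.mul_sub, cWLW, hZ1, cZ1, cZ2, cK1, cK2, cKK1, cKK2, hKK1, hKK2, Matrix.mul_one,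
        Matrix.one_mul]
      abel
  -- block form of 1 + T₂T₂ᵀ and its inverse
  have hL₂ : 1 + T₂ * T₂ᵀ = Matrix.fromBlocks L (T * Wᵀ) (W * Tᵀ) (LK + W * Wᵀ) := by
    rw [hT₂, Matrix.fromBlocks_transpose, Matrix.fromBlocks_multiply, ← Matrix.fromBlocks_one,
      Matrix.fromBlocks_add]
    simp only [Matrix.transpose_zero, Matrix.zero_mul, Matrix.mul_zero, add_zero, zero_add,
      hLdef, hLKblock, add_assoc]
    congr 1
    abel
  obtain ⟨L2i, hL2idef⟩ : ∃ X, X = Matrix.fromBlocks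
      (L⁻¹ + L⁻¹ * (T * (Wᵀ * (Y⁻¹ * (W * (Tᵀ * L⁻¹))))))
      (-(L⁻¹ * (T * (Wᵀ * Y⁻¹)))) (-(Y⁻¹ * (W * (Tᵀ * L⁻¹)))) Y⁻¹ := ⟨_, rfl⟩
  have cLKY : ∀ {q : Type} (M : Matrix (Fin b × Fin s) q ℝ),
      LK * (Y⁻¹ * M) = M - W * (K⁻¹ * (Wᵀ * (Y⁻¹ * M))) := fun M => by
    rw [cWKW, cY1]; abel
  have hLKY : LK * Y⁻¹ = 1 - W * (K⁻¹ * (Wᵀ * Y⁻¹)) := by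
    have h := cLKY (1 : Matrix (Fin b × Fin s) (Fin b × Fin s) ℝ)
    simpa only [Matrix.mul_one] using h
  have hL₂inv : (1 + T₂ * T₂ᵀ)⁻¹ = L2i := by
    refine Matrix.inv_eq_right_inv ?_
    rw [hL₂, hL2idef, Matrix.fromBlocks_multiply, ← Matrix.fromBlocks_one]
    rw [Matrix.fromBlocks_inj]
    refine ⟨?_, ?_, ?_, ?_⟩
    · simp only [Matrix.mul_neg, Matrix.mul_add, Matrix.add_mul, Matrix.mul_assoc, hL1, cL1,
        Matrix.mul_one, Matrix.one_mul]
      abel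
    · simp only [Matrix.mul_neg, Matrix.mul_add, Matrix.add_mul, Matrix.mul_assoc, cL1,
        Matrix.mul_one, Matrix.one_mul]
      abel
    · simp only [Matrix.mul_neg, Matrix.mul_add, Matrix.add_mul, Matrix.mul_sub,
        Matrix.mul_assoc, cTLT, cLKY, Matrix.mul_one, Matrix.one_mul]
      abel
    · simp only [Matrix.mul_neg, Matrix.mul_add, Matrix.add_mul, Matrix.mul_sub,
        Matrix.mul_assoc, cTLT, hLKY, hY1, Matrix.mul_one, Matrix.one_mul]
      abel
  -- assorted reassociated forms
  have hA₁' : A₁ = P - U * (K⁻¹ * (Tᵀ * V)) := by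
    rw [hA₁]; simp only [Matrix.mul_assoc]
  have hA₁t : A₁ᵀ = Pᵀ - Vᵀ * (T * (K⁻¹ * Uᵀ)) := by
    rw [hA₁]
    simp only [Matrix.transpose_sub, Matrix.transpose_mul, Matrix.transpose_transpose, hKisym,
      Matrix.mul_assoc]
  have hAkt : Akᵀ = Pkᵀ - Vkᵀ * (Tk * (Ki * Ukᵀ)) := by
    rw [hAkblock]
    simp only [Matrix.transpose_sub, Matrix.transpose_mul, Matrix.transpose_transpose, hKit,
      Matrix.mul_assoc]
  have hH₁' : H₁ = Vᵀ * (L⁻¹ * V) := by rw [hH₁]; simp only [Matrix.mul_assoc]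
  have cDG : ∀ {q : Type} (M : Matrix (Fin n × Fin s) q ℝ),
      D * (G₁ * M) = U * (Z⁻¹ * (Uᵀ * M)) := fun M => by
    rw [← Matrix.mul_assoc, g2]; simp only [Matrix.mul_assoc]
  have cHD : ∀ {q : Type} (M : Matrix (Fin n × Fin s) q ℝ),
      Hk * (D * M) = Vkᵀ * (Y⁻¹ * (Vk * M)) := fun M => by
    rw [← Matrix.mul_assoc, g3]; simp only [Matrix.mul_assoc]
  refine ⟨hXunit, ?_, ?_, ?_⟩
  · -- A-iterate
    rw [hXinv, hK₂inv, hK2idef, hP₂, hU₂, hV₂, hT₂, hDdef, hCdef]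
    simp only [Matrix.fromBlocks_transpose, Matrix.transpose_zero,
      Matrix.fromCols_mul_fromBlocks, Matrix.fromBlocks_mul_fromRows,
      Matrix.fromCols_mul_fromRows, hA₁', hAkblock,
      Matrix.mul_neg, Matrix.neg_mul, Matrix.mul_add, Matrix.add_mul, Matrix.mul_sub,
      Matrix.sub_mul, Matrix.mul_one, Matrix.one_mul, Matrix.zero_mul, Matrix.mul_zero,
      add_zero, zero_add, Matrix.mul_assoc,
      hWfold, cVU, cUVt, cTKT, cWLW, cZ1, cZ2, cK1, cK2, Matrix.mul_sub]
    abel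
  · -- G-iterate
    rw [hXinv, hGkblock, hK₂inv, hK2idef, hU₂]
    simp only [Matrix.transpose_fromCols, Matrix.transpose_mul,
      Matrix.fromCols_mul_fromBlocks, Matrix.fromCols_mul_fromRows,
      Matrix.mul_assoc, hAtk, cDG]
    simp only [hAkt]
    simp only [hAkblock,
      Matrix.mul_neg, Matrix.neg_mul, Matrix.mul_add, Matrix.add_mul, Matrix.mul_sub,
      Matrix.sub_mul, Matrix.mul_one, Matrix.one_mul, Matrix.mul_assoc,
      hWfold, hWtfold, cVU, cUVt, cTKT, cWLW, cZ1, cZ2, cK1, cK2, Matrix.mul_sub]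
    abel
  · -- H-iterate
    rw [hXinv, hL₂inv, hL2idef, hV₂]
    simp only [Matrix.transpose_fromRows, Matrix.transpose_mul,
      Matrix.fromCols_mul_fromBlocks, Matrix.fromCols_mul_fromRows,
      Matrix.mul_assoc, cHD]
    simp only [hA₁t]
    simp only [hA₁', hH₁',
      Matrix.mul_neg, Matrix.neg_mul, Matrix.mul_add, Matrix.add_mul, Matrix.mul_sub,
      Matrix.sub_mul, Matrix.mul_one, Matrix.one_mul, Matrix.mul_assoc,
      hWfold, hWtfold, cVU, cUVt, cKiT, cTKi, cY1, cY2, cL1, cL2, Matrix.mul_sub]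
    abel
end
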